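/- arXiv:1604.00836 — 2 statements merged into one kernel-verified Lean document; each statement's English description precedes it below -/
import Mathlib

section
/- Let G be a finite simple graph with at least 2 vertices that is 3-edge-connected, and fix a rotation system σ on G. Define the expansion H of G along σ to be the simple graph whose vertex set is the disjoint union of the vertex set V of G and the set D of darts of G, with adjacency given by: a vertex v ∈ V is adjacent to a dart d ∈ D if and only if the tail of d equals v; two darts d, d' ∈ D are adjacent if and only if either d' is the reversal of d, or d and d' have the same tail w and d' = σ_w(d) or d = σ_w(d'); and no two vertices of V are adjacent. Then H is 3-connected: H has at least 4 vertices and, for every set S of at most 2 vertices of H, the induced subgraph of H on the complement of S is connected. -/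
open SimpleGraph Sum Function

section AuxExp

variable {V : Type*} [Fintype V] [DecidableEq V] {G : SimpleGraph V} [DecidableRel G.Adj]

omit [Fintype V] [DecidableEq V] [DecidableRel G.Adj] in
private lemma expAux_iterate_tail (σ : Equiv.Perm G.Dart)
    (hσtail : ∀ d : G.Dart, (σ d).fst = d.fst) :
    ∀ (n : ℕ) (d : G.Dart), ((⇑σ)^[n] d).fst = d.fst := by
  intro n
  induction n with
  | zero => intro d; rfl
  | succ n ih =>
      intro d
      rw [Function.iterate_succ_apply, ih (σ d), hσtail]

omit [DecidableEq V] in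
private lemma expAux_cycle_avoid (σ : Equiv.Perm G.Dart) (bad : G.Dart → Prop)
    (hbad : ∀ a b : G.Dart, bad a → bad b → a = b)
    (d d' : G.Dart) (hn : ∃ n, (⇑σ)^[n] d = d')
    (hd : ¬ bad d) (hd' : ¬ bad d') :
    (∃ n, (⇑σ)^[n] d = d' ∧ ∀ k ≤ n, ¬ bad ((⇑σ)^[k] d)) ∨
    (∃ n, (⇑σ)^[n] d' = d ∧ ∀ k ≤ n, ¬ bad ((⇑σ)^[k] d')) := by
  rcases eq_or_ne d d' with rfl | hne
  · left
    exact ⟨0, rfl, by intro k hk; interval_cases k; exact hd⟩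
  have hper : d ∈ Function.periodicPts ⇑σ := by
    refine ⟨orderOf σ, orderOf_pos σ, ?_⟩
    show (⇑σ)^[orderOf σ] d = d
    rw [Equiv.Perm.iterate_eq_pow, pow_orderOf_eq_one]
    rfl
  set p := Function.minimalPeriod ⇑σ d with hp
  have hppos : 0 < p := Function.minimalPeriod_pos_of_mem_periodicPts hper
  have hpd : (⇑σ)^[p] d = d := Function.iterate_minimalPeriod
  obtain ⟨n0, hn0⟩ := hn
  have hmod : (⇑σ)^[n0 % p] d = d' := by
    rw [Function.iterate_mod_minimalPeriod_eq]; exact hn0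
  set n := n0 % p with hndef
  have hnlt : n < p := Nat.mod_lt _ hppos
  have hnpos : 0 < n := by
    rcases Nat.eq_zero_or_pos n with h0 | h
    · exfalso; apply hne; rw [← hmod, h0]; rfl
    · exact h
  by_cases hA : ∀ k ≤ n, ¬ bad ((⇑σ)^[k] d)
  · exact Or.inl ⟨n, hmod, hA⟩
  · push_neg at hA
    obtain ⟨k, hkn, hkbad⟩ := hA
    have hk0 : k ≠ 0 := by rintro rfl; exact hd hkbad
    have hkn' : k ≠ n := by rintro rfl; rw [hmod] at hkbad; exact hd' hkbad
    have hklt : k < n := lt_of_le_of_ne hkn hkn'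
    right
    refine ⟨p - n, ?_, ?_⟩
    · rw [← hmod, ← Function.iterate_add_apply, Nat.sub_add_cancel hnlt.le, hpd]
    · intro l hl hbadl
      have hl' : (⇑σ)^[l] d' = (⇑σ)^[l + n] d := by
        rw [← hmod, ← Function.iterate_add_apply]
      rw [hl'] at hbadl
      rcases eq_or_lt_of_le hl with rfl | hllt
      · rw [Nat.sub_add_cancel hnlt.le, hpd] at hbadl
        exact hd hbadl
      · have h1 : l + n < p := by omega
        have := hbad _ _ hkbad hbadl
        have hkeq : k = l + n :=
          Function.iterate_injOn_Iio_minimalPeriod (by exact lt_trans hklt hnlt)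
            (by exact h1) this
        omega

end AuxExp


/-- Expanding a 3-edge-connected finite simple graph (with at least two
vertices) along a rotation system yields a 3-connected graph.  The rotation
system is encoded as a tail-preserving permutation `σ` of the darts of `G`
acting as a single cycle on the set of darts at each vertex.  The expansion
`H` has vertex set `V ⊕ G.Dart`; a vertex `v` is adjacent to a dart `d` iff
the tail of `d` is `v`, and darts `d`, `d'` are adjacent iff `d'` is the
reversal of `d`, or they have the same tail and one is the `σ`-successor of
the other. -/
theorem expansion_of_three_edge_connected_is_three_connected
    {V : Type*} [Fintype V] [DecidableEq V] (G : SimpleGraph V)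
    [DecidableRel G.Adj]
    (hcard : 2 ≤ Fintype.card V)
    (h3ec : ∀ S : Set (Sym2 V), S ⊆ G.edgeSet → S.ncard ≤ 2 →
      (G.deleteEdges S).Connected)
    (σ : Equiv.Perm G.Dart)
    (hσtail : ∀ d : G.Dart, (σ d).fst = d.fst)
    (hσcyc : ∀ d d' : G.Dart, d.fst = d'.fst → ∃ n : ℕ, (⇑σ)^[n] d = d')
    (H : SimpleGraph (V ⊕ G.Dart))
    (hH : H = SimpleGraph.fromRel (fun x y =>
      match x, y with
      | Sum.inl v, Sum.inr d => d.fst = v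
      | Sum.inr d, Sum.inr d' => d' = d.symm ∨ (d.fst = d'.fst ∧ d' = σ d)
      | _, _ => False)) :
    4 ≤ Fintype.card (V ⊕ G.Dart) ∧
      ∀ S : Set (V ⊕ G.Dart), S.ncard ≤ 2 → (H.induce Sᶜ).Connected := by
  -- surviving darts at every vertex, for any small S
  have survive : ∀ S : Set (V ⊕ G.Dart), S.ncard ≤ 2 → ∀ v : V,
      ∃ d : G.Dart, d.fst = v ∧ Sum.inr d ∉ S := by
    intro S hS v
    by_contra hc
    push_neg at hc
    set E : Set (Sym2 V) := SimpleGraph.Dart.edge '' {d : G.Dart | d.fst = v} with hE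
    have hEsub : E ⊆ G.edgeSet := by
      rintro e ⟨d, -, rfl⟩; exact d.edge_mem
    have hEcard : E.ncard ≤ 2 := by
      have h1 : E.ncard ≤ ({d : G.Dart | d.fst = v}).ncard :=
        Set.ncard_image_le (Set.toFinite _)
      have h2 : (Sum.inr '' {d : G.Dart | d.fst = v} : Set (V ⊕ G.Dart)).ncard
          = ({d : G.Dart | d.fst = v}).ncard :=
        Set.ncard_image_of_injective _ Sum.inr_injective
      have h3 : (Sum.inr '' {d : G.Dart | d.fst = v} : Set (V ⊕ G.Dart)) ⊆ S := by
        rintro x ⟨d, hd, rfl⟩; exact hc d hd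
      have h4 := Set.ncard_le_ncard h3 S.toFinite
      omega
    have hconn := h3ec E hEsub hEcard
    obtain ⟨w, hw⟩ := Fintype.exists_ne_of_one_lt_card (by omega) v
    obtain ⟨p⟩ := hconn.preconnected v w
    cases p with
    | nil => exact hw rfl
    | @cons _ x _ h q =>
        rw [SimpleGraph.deleteEdges_adj] at h
        exact h.2 ⟨⟨(v, x), h.1⟩, rfl, rfl⟩
  have hVne : Nonempty V := Fintype.card_pos_iff.mp (by omega)
  obtain ⟨v0⟩ := hVne
  obtain ⟨d0, -, -⟩ := survive ∅ (by simp) v0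
  have hdsymm_ne : ∀ d : G.Dart, d ≠ d.symm := by
    intro d h
    exact d.fst_ne_snd (congrArg (fun e => e.toProd.1) h)
  have hcardD : 2 ≤ Fintype.card G.Dart :=
    Fintype.one_lt_card_iff.mpr ⟨d0, d0.symm, hdsymm_ne d0⟩
  have hcard4 : 4 ≤ Fintype.card (V ⊕ G.Dart) := by
    rw [Fintype.card_sum]; omega
  subst hH
  set Hg := (SimpleGraph.fromRel (fun (x y : V ⊕ G.Dart) =>
      match x, y with
      | Sum.inl v, Sum.inr d => d.fst = v
      | Sum.inr d, Sum.inr d' => d' = d.symm ∨ (d.fst = d'.fst ∧ d' = σ d)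
      | _, _ => False) : SimpleGraph (V ⊕ G.Dart)) with hHg
  refine ⟨hcard4, ?_⟩
  intro S hS
  -- basic reachability tools
  have rea_of_adj : ∀ x y, x ∉ S → y ∉ S → Hg.Adj x y →
      ∃ (hx : x ∈ Sᶜ) (hy : y ∈ Sᶜ), (Hg.induce Sᶜ).Reachable ⟨x, hx⟩ ⟨y, hy⟩ := by
    intro x y hx hy h
    refine ⟨hx, hy, SimpleGraph.Adj.reachable ?_⟩
    show Hg.Adj x y
    exact h
  have rea_refl : ∀ x, x ∉ S →
      ∃ (hx : x ∈ Sᶜ) (hy : x ∈ Sᶜ), (Hg.induce Sᶜ).Reachable ⟨x, hx⟩ ⟨x, hy⟩ :=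
    fun x hx => ⟨hx, hx, SimpleGraph.Reachable.refl _⟩
  have rea_trans : ∀ {x y z},
      (∃ (hx : x ∈ Sᶜ) (hy : y ∈ Sᶜ), (Hg.induce Sᶜ).Reachable ⟨x, hx⟩ ⟨y, hy⟩) →
      (∃ (hy : y ∈ Sᶜ) (hz : z ∈ Sᶜ), (Hg.induce Sᶜ).Reachable ⟨y, hy⟩ ⟨z, hz⟩) →
      ∃ (hx : x ∈ Sᶜ) (hz : z ∈ Sᶜ), (Hg.induce Sᶜ).Reachable ⟨x, hx⟩ ⟨z, hz⟩ := by
    rintro x y z ⟨hx, hy, h1⟩ ⟨hy', hz, h2⟩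
    exact ⟨hx, hz, h1.trans h2⟩
  have rea_symm : ∀ {x y},
      (∃ (hx : x ∈ Sᶜ) (hy : y ∈ Sᶜ), (Hg.induce Sᶜ).Reachable ⟨x, hx⟩ ⟨y, hy⟩) →
      ∃ (hy : y ∈ Sᶜ) (hx : x ∈ Sᶜ), (Hg.induce Sᶜ).Reachable ⟨y, hy⟩ ⟨x, hx⟩ := by
    rintro x y ⟨hx, hy, h⟩
    exact ⟨hy, hx, h.symm⟩
  -- adjacency constructors
  have adj_vd : ∀ (v : V) (d : G.Dart), d.fst = v → Hg.Adj (Sum.inl v) (Sum.inr d) := by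
    intro v d h
    rw [hHg, SimpleGraph.fromRel_adj]
    exact ⟨by simp, Or.inl h⟩
  have adj_symm : ∀ d : G.Dart, Hg.Adj (Sum.inr d) (Sum.inr d.symm) := by
    intro d
    rw [hHg, SimpleGraph.fromRel_adj]
    exact ⟨fun h => hdsymm_ne d (Sum.inr_injective h), Or.inl (Or.inl rfl)⟩
  have adj_sigma : ∀ d : G.Dart, σ d ≠ d → Hg.Adj (Sum.inr d) (Sum.inr (σ d)) := by
    intro d hne
    rw [hHg, SimpleGraph.fromRel_adj]
    exact ⟨fun h => hne (Sum.inr_injective h).symm, Or.inl (Or.inr ⟨(hσtail d).symm, rfl⟩)⟩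
  -- walking along the σ-cycle
  have chain : ∀ (n : ℕ) (d : G.Dart), (∀ k ≤ n, Sum.inr ((⇑σ)^[k] d) ∉ S) →
      ∃ (hx : (Sum.inr d : V ⊕ G.Dart) ∈ Sᶜ) (hy : (Sum.inr ((⇑σ)^[n] d) : V ⊕ G.Dart) ∈ Sᶜ),
        (Hg.induce Sᶜ).Reachable ⟨Sum.inr d, hx⟩ ⟨Sum.inr ((⇑σ)^[n] d), hy⟩ := by
    intro n
    induction n with
    | zero => intro d h; exact rea_refl _ (h 0 le_rfl)
    | succ n ih =>
        intro d h
        have h1 := ih d (fun k hk => h k (hk.trans (Nat.le_succ n)))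
        refine rea_trans h1 ?_
        rcases eq_or_ne (σ ((⇑σ)^[n] d)) ((⇑σ)^[n] d) with he | hne
        · rw [Function.iterate_succ_apply', he]
          exact rea_refl _ (h n (Nat.le_succ n))
        · rw [Function.iterate_succ_apply']
          exact rea_of_adj _ _ (h n (Nat.le_succ n))
            (by have hh := h (n+1) le_rfl
                rwa [Function.iterate_succ_apply'] at hh)
            (adj_sigma _ hne)
  -- reachability within a fan
  have fan : ∀ d d' : G.Dart, d.fst = d'.fst → Sum.inr d ∉ S → Sum.inr d' ∉ S →
      ∃ (hx : (Sum.inr d : V ⊕ G.Dart) ∈ Sᶜ) (hy : (Sum.inr d' : V ⊕ G.Dart) ∈ Sᶜ),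
        (Hg.induce Sᶜ).Reachable ⟨Sum.inr d, hx⟩ ⟨Sum.inr d', hy⟩ := by
    intro d d' hf hd hd'
    by_cases hw : Sum.inl d.fst ∈ S
    · have hbad : ∀ a b : G.Dart, (Sum.inr a : V ⊕ G.Dart) ∈ S → Sum.inr b ∈ S → a = b := by
        intro a b ha hb
        by_contra hab
        have h3 : ({Sum.inl d.fst, Sum.inr a, Sum.inr b} : Set (V ⊕ G.Dart)).ncard = 3 := by
          rw [Set.ncard_insert_of_notMem (by simp), Set.ncard_insert_of_notMem (by simp [hab]),
            Set.ncard_singleton]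
        have hsub : ({Sum.inl d.fst, Sum.inr a, Sum.inr b} : Set (V ⊕ G.Dart)) ⊆ S := by
          rintro x (rfl | rfl | rfl)
          · exact hw
          · exact ha
          · exact hb
        have h4 := Set.ncard_le_ncard hsub S.toFinite
        omega
      rcases expAux_cycle_avoid σ (fun a => (Sum.inr a : V ⊕ G.Dart) ∈ S) hbad d d'
          (hσcyc d d' hf) hd hd' with ⟨n, hn, hk⟩ | ⟨n, hn, hk⟩
      · have h5 := chain n d hk
        rwa [hn] at h5
      · have h5 := chain n d' hk
        rw [hn] at h5
        exact rea_symm h5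
    · exact rea_trans (rea_symm (rea_of_adj _ _ hw hd (adj_vd _ _ rfl)))
        (rea_of_adj _ _ hw hd' (adj_vd _ _ hf.symm))
  have cross : ∀ d : G.Dart, Sum.inr d ∉ S → Sum.inr d.symm ∉ S →
      ∃ (hx : (Sum.inr d : V ⊕ G.Dart) ∈ Sᶜ) (hy : (Sum.inr d.symm : V ⊕ G.Dart) ∈ Sᶜ),
        (Hg.induce Sᶜ).Reachable ⟨Sum.inr d, hx⟩ ⟨Sum.inr d.symm, hy⟩ :=
    fun d hd hd' => rea_of_adj _ _ hd hd' (adj_symm d)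
  -- delete the edges of the removed darts
  set E : Set (Sym2 V) := SimpleGraph.Dart.edge '' {d : G.Dart | (Sum.inr d : V ⊕ G.Dart) ∈ S}
    with hEdef
  have hEsub : E ⊆ G.edgeSet := by rintro e ⟨d, -, rfl⟩; exact d.edge_mem
  have hEcard : E.ncard ≤ 2 := by
    have h1 : E.ncard ≤ ({d : G.Dart | (Sum.inr d : V ⊕ G.Dart) ∈ S}).ncard :=
      Set.ncard_image_le (Set.toFinite _)
    have h2 : (Sum.inr '' {d : G.Dart | (Sum.inr d : V ⊕ G.Dart) ∈ S} : Set (V ⊕ G.Dart)).ncard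
        = ({d : G.Dart | (Sum.inr d : V ⊕ G.Dart) ∈ S}).ncard :=
      Set.ncard_image_of_injective _ Sum.inr_injective
    have h3 : (Sum.inr '' {d : G.Dart | (Sum.inr d : V ⊕ G.Dart) ∈ S} : Set (V ⊕ G.Dart)) ⊆ S := by
      rintro x ⟨dd, hdd, rfl⟩; exact hdd
    have h4 := Set.ncard_le_ncard h3 S.toFinite
    omega
  have hGE := h3ec E hEsub hEcard
  have walkInd : ∀ (u w : V) (p : (G.deleteEdges E).Walk u w), ∀ a : G.Dart, a.fst = u →
      Sum.inr a ∉ S → ∀ b : G.Dart, b.fst = w → Sum.inr b ∉ S →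
      ∃ (hx : (Sum.inr a : V ⊕ G.Dart) ∈ Sᶜ) (hy : (Sum.inr b : V ⊕ G.Dart) ∈ Sᶜ),
        (Hg.induce Sᶜ).Reachable ⟨Sum.inr a, hx⟩ ⟨Sum.inr b, hy⟩ := by
    intro u w p
    induction p with
    | nil => intro a ha haS b hb hbS; exact fan a b (by rw [ha, hb]) haS hbS
    | @cons u' x w' h q ih =>
        intro a ha haS b hb hbS
        rw [SimpleGraph.deleteEdges_adj] at h
        have hd1S : (Sum.inr (⟨(u', x), h.1⟩ : G.Dart) : V ⊕ G.Dart) ∉ S :=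
          fun hmem => h.2 ⟨⟨(u', x), h.1⟩, hmem, rfl⟩
        have hd2S : (Sum.inr (⟨(u', x), h.1⟩ : G.Dart).symm : V ⊕ G.Dart) ∉ S :=
          fun hmem => h.2 ⟨(⟨(u', x), h.1⟩ : G.Dart).symm, hmem, by simp⟩
        exact rea_trans (fan a _ (by rw [ha]) haS hd1S)
          (rea_trans (cross _ hd1S hd2S) (ih _ rfl hd2S b hb hbS))
  have anchor : ∀ x : V ⊕ G.Dart, x ∉ S → ∃ d : G.Dart, Sum.inr d ∉ S ∧
      ∃ (hx : x ∈ Sᶜ) (hy : (Sum.inr d : V ⊕ G.Dart) ∈ Sᶜ),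
        (Hg.induce Sᶜ).Reachable ⟨x, hx⟩ ⟨Sum.inr d, hy⟩ := by
    intro x hx
    cases x with
    | inl v =>
        obtain ⟨d, hdv, hdS⟩ := survive S hS v
        exact ⟨d, hdS, rea_of_adj _ _ hx hdS (adj_vd v d hdv)⟩
    | inr d => exact ⟨d, hx, rea_refl _ hx⟩
  rw [SimpleGraph.connected_iff]
  constructor
  · rintro ⟨x, hx⟩ ⟨y, hy⟩
    obtain ⟨dx, hdxS, hx1⟩ := anchor x hx
    obtain ⟨dy, hdyS, hy1⟩ := anchor y hy
    obtain ⟨p⟩ := hGE.preconnected dx.fst dy.fst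
    have hmid := walkInd _ _ p dx rfl hdxS dy rfl hdyS
    obtain ⟨hx', hy', hr⟩ := rea_trans hx1 (rea_trans hmid (rea_symm hy1))
    exact hr
  · obtain ⟨x, hx⟩ : ∃ x : V ⊕ G.Dart, x ∉ S := by
      by_contra hall
      push_neg at hall
      have huniv : S = Set.univ := Set.eq_univ_of_forall hall
      rw [huniv, Set.ncard_univ, Nat.card_eq_fintype_card] at hS
      omega
    exact ⟨⟨x, hx⟩⟩
end

section
/- Every finite simple graph that is 3-connected contains a subdivision of K₄; that is, there exist four distinct vertices w₁, w₂, w₃, w₄ of G and six paths P_{ij} in G for 1 ≤ i < j ≤ 4, where P_{ij} has endpoints w_i and w_j, any two of the six paths share no vertices other than common endpoints among {w₁, w₂, w₃, w₄}, and no w_k is an internal vertex of any of the paths. -/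
/-!
Let `u` be an end of a longest path. Every vertex has degree at least three (a vertex of
degree at most two is cut off from the other vertices by its neighbourhood), and all
neighbours of `u` lie on the path, so the path contains a subpath `M` from a neighbour `x₁` to a
neighbour `x₃` through a third neighbour `c`. With the edges `ux₁`, `ux₃` it forms a cycle
with the chord `uc`. As `G - {u, c}` is connected, a path `Q` avoiding `u` and `c` joins the arcs
`x₁ ⋯ c` and `c ⋯ x₃` of `M` and meets `M` only in its ends `a` and `b`. The chord `uc` and the
path `Q` cross, so `u, a, c, b` are the branch vertices of a subdivided `K₄`.
-/

namespace SimpleGraph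

variable {V : Type*} {G : SimpleGraph V}

def HasK4Subdivision (G : SimpleGraph V) : Prop :=
  ∃ w : Fin 4 → V, Function.Injective w ∧
    ∃ P : ∀ i j : Fin 4, i < j → G.Walk (w i) (w j),
      (∀ i j (h : i < j), (P i j h).IsPath) ∧
      (∀ i j (h : i < j) (k : Fin 4), k ≠ i → k ≠ j → w k ∉ (P i j h).support) ∧
      (∀ i j (h : i < j) i' j' (h' : i' < j'), (i, j) ≠ (i', j') →
        ∀ x : V, x ∈ (P i j h).support → x ∈ (P i' j' h').support → x ∈ Set.range w)

namespace Walk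

lemma IsPath.eq_of_mem_support_of_append {u v w x : V} {p : G.Walk u v} {q : G.Walk v w}
    (hpq : (p.append q).IsPath) (hp : x ∈ p.support) (hq : x ∈ q.support) : x = v := by
  by_contra hne
  exact hpq.ne_of_mem_support_of_append hne hp hq rfl

lemma mem_support_dropUntil_of_first_mem [DecidableEq V] {N : Finset V} {s t y x : V}
    {p : G.Walk s t} (hy : y ∈ p.support)
    (hfirst : ∀ z ∈ N, z ∈ (p.takeUntil y hy).support → z = y) (hxN : x ∈ N)
    (hx : x ∈ p.support) : x ∈ (p.dropUntil y hy).support := by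
  rw [← p.take_spec hy, mem_support_append_iff] at hx
  rcases hx with hx | hx
  · obtain rfl := hfirst x hxN hx
    exact start_mem_support _
  · exact hx

lemma exists_isPath_between_finsets (X Y : Finset V) {s t : V} (p : G.Walk s t) (hs : s ∈ X)
    (ht : t ∈ Y) :
    ∃ a ∈ X, ∃ b ∈ Y, ∃ q : G.Walk a b, q.IsPath ∧ q.support ⊆ p.support ∧
      (∀ x ∈ q.support, x ∈ X → x = a) ∧ ∀ x ∈ q.support, x ∈ Y → x = b := by
  classical
  obtain ⟨b, hbY, hb, hfirst⟩ :=
    p.exists_mem_support_forall_mem_support_imp_eq Y ⟨t, by simp [ht]⟩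
  set r := (p.takeUntil b hb).reverse
  obtain ⟨a, haX, ha, hlast⟩ :=
    r.exists_mem_support_forall_mem_support_imp_eq X ⟨s, by simp [r, hs]⟩
  have hsub : (r.takeUntil a ha).reverse.bypass.support ⊆ r.support := fun x hx =>
    support_takeUntil_subset_support _ _ (by simpa using support_bypass_subset_support _ hx)
  refine ⟨a, haX, b, hbY, (r.takeUntil a ha).reverse.bypass, bypass_isPath _,
    fun x hx => support_takeUntil_subset_support _ _ (by simpa [r] using hsub hx),
    fun x hx hxX => hlast x hxX (by simpa using support_bypass_subset_support _ hx),
    fun x hx hxY => hfirst x hxY (by simpa [r] using hsub hx)⟩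

lemma IsPath.exists_subpath_spanning {s t : V} {p : G.Walk s t} (hp : p.IsPath) (N : Finset V)
    (hN : ∃ x ∈ N, x ∈ p.support) :
    ∃ a ∈ N, ∃ b ∈ N, ∃ q : G.Walk a b, q.IsPath ∧ q.support ⊆ p.support ∧
      ∀ x ∈ N, x ∈ p.support → x ∈ q.support := by
  classical
  obtain ⟨b, hbN, hb, hlast⟩ :=
    p.reverse.exists_mem_support_forall_mem_support_imp_eq N (by simpa [Finset.Nonempty] using hN)
  set r := p.reverse.dropUntil b hb
  have hr : ∀ x ∈ N, x ∈ p.support → x ∈ r.support := fun x hxN hx =>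
    mem_support_dropUntil_of_first_mem hb hlast hxN (by simpa using hx)
  obtain ⟨a, haN, ha, hfirst⟩ :=
    r.reverse.exists_mem_support_forall_mem_support_imp_eq N ⟨b, by simp [hbN]⟩
  refine ⟨a, haN, b, hbN, r.reverse.dropUntil a ha,
    (hp.reverse.dropUntil hb).reverse.dropUntil ha, fun x hx => ?_,
    fun x hxN hx => mem_support_dropUntil_of_first_mem ha hfirst hxN (by simpa using hr x hxN hx)⟩
  have hxr : x ∈ r.support := by simpa using support_dropUntil_subset_support _ _ hx
  simpa using support_dropUntil_subset_support _ _ hxr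

end Walk

lemma Preconnected.exists_walk_of_induce {s : Set V} (h : (G.induce s).Preconnected) {v w : V}
    (hv : v ∈ s) (hw : w ∈ s) : ∃ p : G.Walk v w, ∀ x ∈ p.support, x ∈ s := by
  obtain ⟨p⟩ := h ⟨v, hv⟩ ⟨w, hw⟩
  refine ⟨p.map (Embedding.induce s).toHom, fun x hx => ?_⟩
  obtain ⟨y, -, rfl⟩ := List.mem_map.mp (Walk.support_map _ p ▸ hx)
  exact y.2

lemma eq_or_adj_of_preconnected_induce_compl_neighborSet {v : V}
    (h : (G.induce (G.neighborSet v)ᶜ).Preconnected) (w : V) : w = v ∨ G.Adj v w := by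
  by_contra! hw
  have hv : v ∈ (G.neighborSet v)ᶜ := by simp
  have : Nontrivial ((G.neighborSet v)ᶜ : Set V) :=
    ⟨⟨v, hv⟩, ⟨w, by simpa using hw.2⟩, fun h => hw.1 (congrArg Subtype.val h).symm⟩
  obtain ⟨⟨y, hy⟩, hvy⟩ := h.exists_adj_of_nontrivial ⟨v, hv⟩
  exact hy (by simpa using hvy)

lemma two_lt_ncard_neighborSet [Fintype V] (hcard : 4 ≤ Fintype.card V)
    (h3c : ∀ S : Set V, S.ncard ≤ 2 → (G.induce Sᶜ).Connected) (v : V) :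
    2 < (G.neighborSet v).ncard := by
  by_contra! hle
  have hall : Set.univ ⊆ insert v (G.neighborSet v) := fun w _ =>
    eq_or_adj_of_preconnected_induce_compl_neighborSet (h3c _ hle).preconnected w
  have := (Set.ncard_le_ncard hall).trans (Set.ncard_insert_le v _)
  rw [Set.ncard_univ, Nat.card_eq_fintype_card] at this
  omega

lemma exists_isPath_notMem_support_forall_adj_mem_support [Finite V] [Nonempty V]
    (hG : ∀ v, (G.neighborSet v).Nonempty) :
    ∃ u v w, ∃ q : G.Walk v w, q.IsPath ∧ u ∉ q.support ∧ ∀ x, G.Adj u x → x ∈ q.support := by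
  obtain ⟨u, z, p, hp, hmax⟩ := Walk.exists_isPath_forall_isPath_length_le_length G
  have hnbr : ∀ x, G.Adj u x → x ∈ p.support := fun x hx => by
    by_contra hxp
    have := hmax _ _ _ (hp.cons hxp (h := hx.symm))
    simp at this
  cases p with
  | nil =>
    obtain ⟨x, hx⟩ := hG u
    exact absurd (by simpa using hnbr x hx) hx.ne'
  | cons h q =>
    rw [Walk.cons_isPath_iff] at hp
    exact ⟨u, _, z, q, hp.1, hp.2, fun x hx => by simpa [hx.ne'] using hnbr x hx⟩

/- The branch vertices are `u, a, c, b`: the cycle `u x₁ T₁ a D₁ c T₂ b D₂ x₃ u` supplies the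
paths `ua`, `ac`, `cb`, `bu`, the chord `uc` and the path `Q` the other two. -/
lemma hasK4Subdivision_of_crossing_chords {u x₁ x₃ a c b : V} (h₁ : G.Adj u x₁)
    (h₂ : G.Adj u c) (h₃ : G.Adj u x₃) (T₁ : G.Walk x₁ a) (D₁ : G.Walk a c) (T₂ : G.Walk c b)
    (D₂ : G.Walk b x₃) (Q : G.Walk a b) (hM : (T₁.append (D₁.append (T₂.append D₂))).IsPath)
    (huM : u ∉ (T₁.append (D₁.append (T₂.append D₂))).support) (hQ : Q.IsPath)
    (huQ : u ∉ Q.support)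
    (hQM : ∀ x ∈ Q.support, x ∈ (T₁.append (D₁.append (T₂.append D₂))).support → x = a ∨ x = b)
    (hac : a ≠ c) (hbc : b ≠ c) : G.HasK4Subdivision := by
  have hT₁ : ∀ x ∈ T₁.support, x ∈ (D₁.append (T₂.append D₂)).support → x = a :=
    fun _ => hM.eq_of_mem_support_of_append
  have hD₁ : ∀ x ∈ D₁.support, x ∈ (T₂.append D₂).support → x = c :=
    fun _ => hM.of_append_right.eq_of_mem_support_of_append
  have hT₂ : ∀ x ∈ T₂.support, x ∈ D₂.support → x = b :=
    fun _ => hM.of_append_right.of_append_right.eq_of_mem_support_of_append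
  simp only [Walk.mem_support_append_iff] at huM hQM hT₁ hD₁
  have pT₁ := hM.of_append_left
  have pD₁ := hM.of_append_right.of_append_left
  have pT₂ := hM.of_append_right.of_append_right.of_append_left
  have pD₂ := hM.of_append_right.of_append_right.of_append_right
  have hrange : ∀ x, x ∈ Set.range ![u, a, c, b] ↔ x = u ∨ x = a ∨ x = c ∨ x = b := by
    simp only [Matrix.range_cons, Matrix.range_empty, Set.union_empty, Set.union_singleton,
      Set.union_insert, Set.mem_insert_iff, Set.mem_singleton_iff]
    tauto
  refine ⟨![u, a, c, b], ?_, fun i j h => match i, j, h with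
    | 0, 1, _ => .cons h₁ T₁
    | 0, 2, _ => h₂.toWalk
    | 0, 3, _ => .cons h₃ D₂.reverse
    | 1, 2, _ => D₁
    | 1, 3, _ => Q
    | 2, 3, _ => T₂
    | 0, 0, h | 1, 0, h | 2, 0, h | 3, 0, h | 1, 1, h | 2, 1, h | 3, 1, h | 2, 2, h | 3, 2, h
    | 3, 3, h => absurd h (by decide), ?_, ?_, ?_⟩
  · intro i j hij
    fin_cases i <;> fin_cases j <;>
      simp only [Fin.isValue, Fin.reduceFinMk, Fin.zero_eta, Fin.mk_one, Matrix.cons_val,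
        Matrix.cons_val_zero, Matrix.cons_val_one] at hij ⊢ <;>
      grind [Walk.start_mem_support, Walk.end_mem_support]
  · intro i j h
    fin_cases i <;> fin_cases j <;> first
      | exact absurd h (by decide)
      | simp only [Fin.isValue, Fin.reduceFinMk, Fin.zero_eta, Fin.mk_one, Matrix.cons_val,
          Matrix.cons_val_zero, Matrix.cons_val_one, Walk.cons_isPath_iff,
          Walk.isPath_reverse_iff, Walk.IsPath.nil, Walk.support_nil, Walk.support_reverse,
          List.mem_cons, List.mem_reverse]
        grind [Walk.start_mem_support, Walk.end_mem_support]
  · intro i j h k hi hj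
    fin_cases i <;> fin_cases j <;> first
      | exact absurd h (by decide)
      | fin_cases k <;>
          simp only [Fin.isValue, Fin.reduceFinMk, Fin.zero_eta, Fin.mk_one, Matrix.cons_val,
            Matrix.cons_val_zero, Matrix.cons_val_one, Walk.support_cons, Walk.support_nil,
            Walk.support_reverse, List.mem_cons, List.mem_reverse] at hi hj ⊢ <;>
          grind [Walk.start_mem_support, Walk.end_mem_support]
  · intro i j h i' j' h' hne x hx hx'
    fin_cases i <;> fin_cases j <;> first
      | exact absurd h (by decide)
      | fin_cases i' <;> fin_cases j' <;> first
        | exact absurd h' (by decide)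
        | simp only [Fin.isValue, Fin.reduceFinMk, Fin.zero_eta, Fin.mk_one, Matrix.cons_val,
            Matrix.cons_val_zero, Matrix.cons_val_one, Walk.support_cons, Walk.support_nil,
            Walk.support_reverse, List.mem_cons, List.mem_reverse, hrange] at hne hx hx' ⊢
          grind [Walk.start_mem_support, Walk.end_mem_support]

lemma hasK4Subdivision_of_isPath_of_walk_avoiding {u x₁ c x₃ : V} (M : G.Walk x₁ x₃)
    (hM : M.IsPath) (hcM : c ∈ M.support) (huM : u ∉ M.support) (h₁ : G.Adj u x₁)
    (h₂ : G.Adj u c) (h₃ : G.Adj u x₃) (W : G.Walk x₁ x₃) (huW : u ∉ W.support)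
    (hcW : c ∉ W.support) : G.HasK4Subdivision := by
  classical
  set S₁ := M.takeUntil c hcM
  set S₂ := M.dropUntil c hcM
  obtain ⟨a, ha, b, hb, Q, hQ, hQW, hQ₁, hQ₂⟩ :=
    W.exists_isPath_between_finsets S₁.support.toFinset S₂.support.toFinset (by simp) (by simp)
  simp only [List.mem_toFinset] at ha hb hQ₁ hQ₂
  have hsplit : (S₁.takeUntil a ha).append ((S₁.dropUntil a ha).append
      ((S₂.takeUntil b hb).append (S₂.dropUntil b hb))) = M := by
    rw [Walk.append_assoc, Walk.take_spec, Walk.take_spec, Walk.take_spec]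
  refine hasK4Subdivision_of_crossing_chords h₁ h₂ h₃ _ _ _ _ Q (hsplit ▸ hM) (hsplit ▸ huM) hQ
    (fun h => huW (hQW h)) (fun x hx hxM => ?_) (fun h => hcW (hQW (h ▸ Q.start_mem_support)))
    (fun h => hcW (hQW (h ▸ Q.end_mem_support)))
  rw [hsplit, ← M.take_spec hcM, Walk.mem_support_append_iff] at hxM
  exact hxM.imp (hQ₁ x hx) (hQ₂ x hx)

end SimpleGraph

open SimpleGraph

/-- Every 3-connected finite simple graph contains a subdivision of `K₄`:
there are four distinct vertices and six paths joining each pair of them,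
such that none of the four vertices lies on a path not having it as an
endpoint, and any vertex shared by two of the paths is one of the four
branch vertices (hence a common endpoint). -/
theorem three_connected_contains_K4_subdivision
    {V : Type*} [Fintype V] (G : SimpleGraph V)
    (hcard : 4 ≤ Fintype.card V)
    (h3c : ∀ S : Set V, S.ncard ≤ 2 → (G.induce Sᶜ).Connected) :
    ∃ w : Fin 4 → V, Function.Injective w ∧
      ∃ P : ∀ i j : Fin 4, i < j → G.Walk (w i) (w j),
        (∀ i j (h : i < j), (P i j h).IsPath) ∧
        (∀ i j (h : i < j) (k : Fin 4), k ≠ i → k ≠ j →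
          w k ∉ (P i j h).support) ∧
        (∀ i j (h : i < j) i' j' (h' : i' < j'), (i, j) ≠ (i', j') →
          ∀ x : V, x ∈ (P i j h).support → x ∈ (P i' j' h').support →
            x ∈ Set.range w) := by
  classical
  have hdeg := two_lt_ncard_neighborSet hcard h3c
  have : Nonempty V := Fintype.card_pos_iff.mp (by omega)
  obtain ⟨u, _, _, q, hq, huq, hNq⟩ := exists_isPath_notMem_support_forall_adj_mem_support
    fun v => Set.nonempty_of_ncard_ne_zero (zero_lt_two.trans (hdeg v)).ne'
  obtain ⟨x, y, z, hx, hy, hz, hxy, hxz, hyz⟩ := (Set.two_lt_ncard_iff).mp (hdeg u)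
  have hadj : ∀ v ∈ ({x, y, z} : Finset V), G.Adj u v := by
    simp only [Finset.mem_insert, Finset.mem_singleton]
    rintro v (rfl | rfl | rfl) <;> assumption
  obtain ⟨x₁, hx₁, x₃, hx₃, M, hM, hMq, hxyzM⟩ :=
    hq.exists_subpath_spanning {x, y, z} ⟨x, by simp, hNq x hx⟩
  obtain ⟨c, hc, hc₁, hc₃⟩ : ∃ c ∈ ({x, y, z} : Finset V), c ≠ x₁ ∧ c ≠ x₃ := by
    by_contra! h
    have := h x (by simp); have := h y (by simp); have := h z (by simp)
    simp only [Finset.mem_insert, Finset.mem_singleton] at hx₁ hx₃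
    grind
  obtain ⟨W, hW⟩ := (h3c {u, c} ((Set.ncard_insert_le _ _).trans (by simp))).preconnected
    |>.exists_walk_of_induce (v := x₁) (w := x₃) (by simp [hc₁.symm, (hadj _ hx₁).ne'])
      (by simp [hc₃.symm, (hadj _ hx₃).ne'])
  exact hasK4Subdivision_of_isPath_of_walk_avoiding M hM (hxyzM c hc (hNq c (hadj c hc)))
    (fun h => huq (hMq h)) (hadj _ hx₁) (hadj c hc) (hadj _ hx₃) W (fun h => hW u h (by simp))
    (fun h => hW c h (by simp))
end
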